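/- arXiv:2110.09087 — 2 statements merged into one kernel-verified Lean document; each statement's English description precedes it below -/
import Mathlib

section
/- For real numbers s ≥ s' > 3/2, there exists a constant C > 0 such that for all k ∈ ℝ³, the integral over p ∈ ℝ³ of dp / ((1+|p|²)^{s'}(1+|p-k|²)^s + (1+|p|²)^s(1+|p-k|²)^{s'}) is at most C / (1+|k|²)^s. -/
open MeasureTheory

lemma ptwise_aux (s s' : ℝ) (hs'0 : 0 ≤ s') (hss' : s' ≤ s) (A B K : ℝ)
    (hA : 1 ≤ A) (hB : 1 ≤ B) (hK : 1 ≤ K) (hKB : K ≤ 4 * B) :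
    1 / (A ^ s' * B ^ s + A ^ s * B ^ s') ≤ 4 ^ s / K ^ s * ((A ^ s')⁻¹ + (B ^ s')⁻¹) := by
  have hA0 : (0:ℝ) < A := by linarith
  have hB0 : (0:ℝ) < B := by linarith
  have hK0 : (0:ℝ) < K := by linarith
  have hs0 : 0 ≤ s := le_trans hs'0 hss'
  have hAs' : (0:ℝ) < A ^ s' := Real.rpow_pos_of_pos hA0 _
  have hAs : (0:ℝ) < A ^ s := Real.rpow_pos_of_pos hA0 _
  have hBs : (0:ℝ) < B ^ s := Real.rpow_pos_of_pos hB0 _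
  have hBs' : (0:ℝ) < B ^ s' := Real.rpow_pos_of_pos hB0 _
  have hKs : (0:ℝ) < K ^ s := Real.rpow_pos_of_pos hK0 _
  have h4s : (0:ℝ) < (4:ℝ) ^ s := Real.rpow_pos_of_pos (by norm_num) _
  have hK4B : K ^ s ≤ 4 ^ s * B ^ s := by
    rw [← Real.mul_rpow (by norm_num) hB0.le]
    exact Real.rpow_le_rpow hK0.le hKB hs0
  calc 1 / (A ^ s' * B ^ s + A ^ s * B ^ s') ≤ 1 / (A ^ s' * B ^ s) :=
        one_div_le_one_div_of_le (by positivity) (by nlinarith)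
    _ ≤ 4 ^ s / (K ^ s * A ^ s') := by
        rw [div_le_div_iff₀ (by positivity) (by positivity)]
        nlinarith
    _ = 4 ^ s / K ^ s * (A ^ s')⁻¹ := by field_simp
    _ ≤ 4 ^ s / K ^ s * ((A ^ s')⁻¹ + (B ^ s')⁻¹) := by
        apply mul_le_mul_of_nonneg_left _ (by positivity)
        linarith [inv_nonneg.mpr hBs'.le]

lemma ptwise (s s' : ℝ) (hs'0 : 0 ≤ s') (hss' : s' ≤ s) (A B K : ℝ)
    (hA : 1 ≤ A) (hB : 1 ≤ B) (hK : 1 ≤ K) (hKAB : K ≤ 2 * A + 2 * B) :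
    1 / (A ^ s' * B ^ s + A ^ s * B ^ s') ≤ 4 ^ s / K ^ s * ((A ^ s')⁻¹ + (B ^ s')⁻¹) := by
  rcases le_total A B with h | h
  · exact ptwise_aux s s' hs'0 hss' A B K hA hB hK (by linarith)
  · have := ptwise_aux s s' hs'0 hss' B A K hB hA hK (by linarith)
    calc 1 / (A ^ s' * B ^ s + A ^ s * B ^ s')
        = 1 / (B ^ s' * A ^ s + B ^ s * A ^ s') := by ring_nf
      _ ≤ 4 ^ s / K ^ s * ((B ^ s')⁻¹ + (A ^ s')⁻¹) := this
      _ = 4 ^ s / K ^ s * ((A ^ s')⁻¹ + (B ^ s')⁻¹) := by ring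

lemma integrable_base (s' : ℝ) (hs' : 3 / 2 < s') :
    Integrable (fun p : EuclideanSpace ℝ (Fin 3) => ((1 + ‖p‖ ^ 2) ^ s')⁻¹) := by
  have h := integrable_rpow_neg_one_add_norm_sq
    (E := EuclideanSpace ℝ (Fin 3)) (μ := volume) (r := 2 * s') ?_
  · refine h.congr (Filter.Eventually.of_forall fun p => ?_)
    dsimp only
    rw [show -(2 * s') / 2 = -s' by ring, Real.rpow_neg (by positivity)]
  · rw [finrank_euclideanSpace_fin]
    norm_num
    linarith

/-- For real numbers `s ≥ s' > 3/2`, there exists `C > 0` such that for all `k ∈ ℝ³`,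
`∫ dp / ((1+|p|²)^{s'}(1+|p-k|²)^s + (1+|p|²)^s(1+|p-k|²)^{s'}) ≤ C / (1+|k|²)^s`. -/
theorem stmt_0 (s s' : ℝ) (hs' : 3 / 2 < s') (hss' : s' ≤ s) :
    ∃ C > (0 : ℝ), ∀ k : EuclideanSpace ℝ (Fin 3),
      (∫ p : EuclideanSpace ℝ (Fin 3),
          1 / ((1 + ‖p‖ ^ 2) ^ s' * (1 + ‖p - k‖ ^ 2) ^ s
              + (1 + ‖p‖ ^ 2) ^ s * (1 + ‖p - k‖ ^ 2) ^ s'))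
        ≤ C / (1 + ‖k‖ ^ 2) ^ s := by
  have hs'0 : (0:ℝ) ≤ s' := by linarith
  have hs0 : (0:ℝ) ≤ s := by linarith
  set g : EuclideanSpace ℝ (Fin 3) → ℝ := fun p => ((1 + ‖p‖ ^ 2) ^ s')⁻¹ with hg
  have hgi : Integrable g := integrable_base s' hs'
  set J : ℝ := ∫ p : EuclideanSpace ℝ (Fin 3), g p with hJ
  have hJ0 : 0 ≤ J := integral_nonneg fun p => by positivity
  have h4s : (0:ℝ) < (4:ℝ) ^ s := Real.rpow_pos_of_pos (by norm_num) _
  refine ⟨1 + 4 ^ s * (2 * J), by positivity, fun k => ?_⟩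
  set K : ℝ := 1 + ‖k‖ ^ 2 with hKdef
  have hK1 : (1:ℝ) ≤ K := le_add_of_nonneg_right (by positivity)
  have hKs : (0:ℝ) < K ^ s := Real.rpow_pos_of_pos (by linarith) _
  have hgk : Integrable (fun p : EuclideanSpace ℝ (Fin 3) => g (p - k)) :=
    hgi.comp_sub_right k
  have hbound : Integrable (fun p : EuclideanSpace ℝ (Fin 3) =>
      4 ^ s / K ^ s * (g p + g (p - k))) := ((hgi.add hgk).const_mul _)
  have hmono : (∫ p : EuclideanSpace ℝ (Fin 3),
      1 / ((1 + ‖p‖ ^ 2) ^ s' * (1 + ‖p - k‖ ^ 2) ^ s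
        + (1 + ‖p‖ ^ 2) ^ s * (1 + ‖p - k‖ ^ 2) ^ s'))
      ≤ ∫ p : EuclideanSpace ℝ (Fin 3), 4 ^ s / K ^ s * (g p + g (p - k)) := by
    refine integral_mono_of_nonneg (Filter.Eventually.of_forall fun p => by positivity) hbound
      (Filter.Eventually.of_forall fun p => ?_)
    have hnk : ‖k‖ ≤ ‖p‖ + ‖p - k‖ := by
      calc ‖k‖ = ‖p - (p - k)‖ := by rw [sub_sub_cancel]
        _ ≤ ‖p‖ + ‖p - k‖ := norm_sub_le _ _
    exact ptwise s s' hs'0 hss' (1 + ‖p‖ ^ 2) (1 + ‖p - k‖ ^ 2) K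
      (le_add_of_nonneg_right (by positivity)) (le_add_of_nonneg_right (by positivity)) hK1
      (by nlinarith [sq_nonneg (‖p‖ - ‖p - k‖), norm_nonneg p, norm_nonneg (p - k), norm_nonneg k])
  have heq : (∫ p : EuclideanSpace ℝ (Fin 3), 4 ^ s / K ^ s * (g p + g (p - k)))
      = 4 ^ s / K ^ s * (2 * J) := by
    rw [integral_const_mul, integral_add hgi hgk,
      integral_sub_right_eq_self g k]
    ring
  refine hmono.trans ?_
  rw [heq, div_mul_eq_mul_div, div_le_div_iff₀ hKs hKs]
  nlinarith
end

section
/- Let s > 3/2 and let Γ be a Hilbert–Schmidt operator on L²(ℝ³, ℂ⁴) such that (1-Δ)^{s/2} Γ (1-Δ)^{s/2} is Hilbert–Schmidt. Then the integral kernel Γ(x,y) of Γ, restricted to the diagonal x ↦ Γ(x,x), defines an element of H^s(ℝ³, ℂ^{4×4}), and there is a constant c depending only on s such that ‖Γ(·,·)‖_{H^s} ≤ c ‖(1-Δ)^{s/2} Γ (1-Δ)^{s/2}‖_{𝔖²}. -/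
open MeasureTheory ENNReal

noncomputable section

abbrev E3 := EuclideanSpace ℝ (Fin 3)

/-- `4×4` complex matrices (with the sup norm coming from the Pi instances). -/
abbrev MT := Fin 4 → Fin 4 → ℂ

def wgt (s : ℝ) (ξ : E3) : ℝ≥0∞ := ENNReal.ofReal ((1 + ‖ξ‖ ^ 2) ^ s)

/-- Squared `𝔥^{a,b}` norm of a kernel given in Fourier variables:
`‖(1-Δ)^{a/2} Γ (1-Δ)^{b/2}‖²_{𝔖²} = ∬ (1+|p|²)^a (1+|q|²)^b ‖Γ̂(p,q)‖² dp dq`. -/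
def hsKerSq (a b : ℝ) (Γ : E3 → E3 → MT) : ℝ≥0∞ :=
  ∫⁻ p, ∫⁻ q, wgt a p * wgt b q * (‖Γ p q‖₊ : ℝ≥0∞) ^ 2

/-- Squared `H^s` norm of the diagonal density `x ↦ Γ(x,x)`, computed in Fourier
variables via `‖Γ(·,·)‖²_{H^s} ∼ ∫ (1+|k|²)^s ‖∫ Γ̂(p,k-p) dp‖² dk`. -/
def diagSq (s : ℝ) (Γ : E3 → E3 → MT) : ℝ≥0∞ :=
  ∫⁻ k, wgt s k * (‖∫ p, Γ p (k - p)‖₊ : ℝ≥0∞) ^ 2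

/-!
In Fourier variables the diagonal has transform `k ↦ ∫ Γ̂(p, k - p) dp`. Cauchy–Schwarz with
the weight `w(p) w(k - p)`, where `w = (1 + |·|²)^s`, bounds `w(k) |∫ Γ̂(p, k - p) dp|²` by
`w(k) ∫ (w(p) w(k - p))⁻¹ dp · ∫ w(p) w(k - p) |Γ̂(p, k - p)|² dp`. The Peetre-type inequality
`w(p + q) ≤ 4^s (w(p) + w(q))` makes the first factor at most `2 · 4^s ∫ w⁻¹`, which is finite
because `2s > 3`. Integrating in `k` and substituting `q = k - p` leaves `‖Γ‖²_{𝔥^s}`.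
-/

theorem ENNReal.lintegral_sq_le_lintegral_mul_sq_mul_lintegral_inv {α : Type*}
    [MeasurableSpace α] {μ : Measure α} {F G : α → ℝ≥0∞} (hF : AEMeasurable F μ)
    (hG : AEMeasurable G μ) (hG₀ : ∀ x, G x ≠ 0) (hG_top : ∀ x, G x ≠ ∞) :
    (∫⁻ x, F x ∂μ) ^ 2 ≤ (∫⁻ x, G x * F x ^ 2 ∂μ) * ∫⁻ x, (G x)⁻¹ ∂μ := by
  have hHolder := ENNReal.lintegral_mul_norm_pow_le (hG.mul (hF.pow_const 2)) hG.inv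
    (p := 2⁻¹) (q := 2⁻¹) (by norm_num) (by norm_num) (by norm_num)
  have hroot : ∀ x, (G x * F x ^ 2) ^ (2⁻¹ : ℝ) * (G x)⁻¹ ^ (2⁻¹ : ℝ) = F x := fun x => by
    rw [← ENNReal.mul_rpow_of_nonneg _ _ (by norm_num), mul_right_comm,
      ENNReal.mul_inv_cancel (hG₀ x) (hG_top x), one_mul, ← ENNReal.rpow_natCast,
      ← ENNReal.rpow_mul]
    norm_num
  simp only [Pi.mul_apply, Pi.inv_apply, hroot] at hHolder
  calc (∫⁻ x, F x ∂μ) ^ 2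
      ≤ ((∫⁻ x, G x * F x ^ 2 ∂μ) ^ (2⁻¹ : ℝ) * (∫⁻ x, (G x)⁻¹ ∂μ) ^ (2⁻¹ : ℝ)) ^ 2 :=
        pow_le_pow_left' hHolder 2
    _ = (∫⁻ x, G x * F x ^ 2 ∂μ) * ∫⁻ x, (G x)⁻¹ ∂μ := by
        rw [← ENNReal.rpow_natCast, ENNReal.mul_rpow_of_nonneg _ _ (by norm_num),
          ← ENNReal.rpow_mul, ← ENNReal.rpow_mul]
        norm_num

theorem MeasureTheory.lintegral_lintegral_comp_prod_sub_swap {G : Type*} [MeasurableSpace G]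
    [AddGroup G] [MeasurableAdd₂ G] [MeasurableNeg G] (μ : Measure G) [SFinite μ]
    [μ.IsAddRightInvariant] {f : G × G → ℝ≥0∞} (hf : Measurable f) :
    ∫⁻ k, ∫⁻ p, f (p, k - p) ∂μ ∂μ = ∫⁻ p, ∫⁻ q, f (p, q) ∂μ ∂μ := by
  have hsub := measurePreserving_prod_sub_swap μ μ
  rw [← lintegral_prod _ hf.aemeasurable, ← hsub.lintegral_comp hf]
  exact (lintegral_prod _ (hf.comp hsub.measurable).aemeasurable).symm

theorem one_add_norm_add_sq_rpow_le {E : Type*} [SeminormedAddCommGroup E] {s : ℝ}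
    (hs : 0 ≤ s) (p q : E) :
    (1 + ‖p + q‖ ^ 2) ^ s ≤ 4 ^ s * ((1 + ‖p‖ ^ 2) ^ s + (1 + ‖q‖ ^ 2) ^ s) := by
  set a := 1 + ‖p‖ ^ 2
  set b := 1 + ‖q‖ ^ 2
  have ha : 0 < a := by positivity
  have hb : 0 < b := by positivity
  have hbase : 1 + ‖p + q‖ ^ 2 ≤ 4 * max a b := by
    have := norm_add_le p q
    nlinarith [le_max_left a b, le_max_right a b, norm_nonneg (p + q),
      sq_nonneg (‖p‖ - ‖q‖), norm_nonneg p, norm_nonneg q]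
  have hmax : max a b ^ s ≤ a ^ s + b ^ s := by
    rcases le_total a b with hab | hab
    · rw [max_eq_right hab]; exact le_add_of_nonneg_left (Real.rpow_nonneg ha.le s)
    · rw [max_eq_left hab]; exact le_add_of_nonneg_right (Real.rpow_nonneg hb.le s)
  calc (1 + ‖p + q‖ ^ 2) ^ s ≤ (4 * max a b) ^ s :=
        Real.rpow_le_rpow (by positivity) hbase hs
    _ = 4 ^ s * max a b ^ s := Real.mul_rpow (by norm_num) (ha.le.trans (le_max_left a b))
    _ ≤ 4 ^ s * (a ^ s + b ^ s) := by gcongr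

theorem measurable_wgt (s : ℝ) : Measurable (wgt s) := by
  unfold wgt
  fun_prop

theorem wgt_ne_zero (s : ℝ) (ξ : E3) : wgt s ξ ≠ 0 := by
  rw [wgt, ne_eq, ENNReal.ofReal_eq_zero, not_le]
  positivity

theorem wgt_ne_top (s : ℝ) (ξ : E3) : wgt s ξ ≠ ∞ := ENNReal.ofReal_ne_top

theorem inv_wgt (s : ℝ) (ξ : E3) : (wgt s ξ)⁻¹ = wgt (-s) ξ := by
  rw [wgt, wgt, Real.rpow_neg (by positivity), ENNReal.ofReal_inv_of_pos (by positivity)]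

section Weight

variable {s : ℝ}

theorem wgt_add_le (hs : 0 ≤ s) (p q : E3) :
    wgt s (p + q) ≤ ENNReal.ofReal (4 ^ s) * (wgt s p + wgt s q) := by
  rw [wgt, wgt, wgt, ← ENNReal.ofReal_add (by positivity) (by positivity),
    ← ENNReal.ofReal_mul (by positivity)]
  exact ENNReal.ofReal_le_ofReal (one_add_norm_add_sq_rpow_le hs p q)

theorem wgt_add_mul_inv_wgt_mul_wgt_le (hs : 0 ≤ s) (p q : E3) :
    wgt s (p + q) * (wgt s p * wgt s q)⁻¹ ≤
      ENNReal.ofReal (4 ^ s) * ((wgt s p)⁻¹ + (wgt s q)⁻¹) := by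
  have hp := ENNReal.mul_inv_cancel (wgt_ne_zero s p) (wgt_ne_top s p)
  have hq := ENNReal.mul_inv_cancel (wgt_ne_zero s q) (wgt_ne_top s q)
  calc wgt s (p + q) * (wgt s p * wgt s q)⁻¹
      ≤ ENNReal.ofReal (4 ^ s) * (wgt s p + wgt s q) * ((wgt s p)⁻¹ * (wgt s q)⁻¹) := by
        rw [ENNReal.mul_inv (.inl (wgt_ne_zero s p)) (.inl (wgt_ne_top s p))]
        gcongr
        exact wgt_add_le hs p q
    _ = ENNReal.ofReal (4 ^ s) * (wgt s p * (wgt s p)⁻¹ * (wgt s q)⁻¹ +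
          wgt s q * (wgt s q)⁻¹ * (wgt s p)⁻¹) := by ring
    _ = ENNReal.ofReal (4 ^ s) * ((wgt s p)⁻¹ + (wgt s q)⁻¹) := by
        rw [hp, hq, one_mul, one_mul, add_comm]

theorem lintegral_inv_wgt_lt_top (hs : 3 / 2 < s) : ∫⁻ ξ : E3, (wgt s ξ)⁻¹ < ∞ := by
  have hint : Integrable fun ξ : E3 => (1 + ‖ξ‖ ^ 2) ^ (-s) := by
    have hdim : (Module.finrank ℝ E3 : ℝ) < 2 * s := by
      rw [finrank_euclideanSpace_fin]; push_cast; linarith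
    simpa [neg_div] using integrable_rpow_neg_one_add_norm_sq hdim
  simp_rw [inv_wgt]
  exact hint.lintegral_lt_top

def diagConst (s : ℝ) : ℝ≥0∞ := ENNReal.ofReal (4 ^ s) * (2 * ∫⁻ ξ : E3, (wgt s ξ)⁻¹)

theorem diagConst_ne_top (hs : 3 / 2 < s) : diagConst s ≠ ∞ :=
  ENNReal.mul_ne_top ENNReal.ofReal_ne_top
    (ENNReal.mul_ne_top ENNReal.ofNat_ne_top (lintegral_inv_wgt_lt_top hs).ne)

theorem wgt_mul_lintegral_inv_wgt_mul_wgt_sub_le (hs : 0 ≤ s) (k : E3) :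
    wgt s k * ∫⁻ p, (wgt s p * wgt s (k - p))⁻¹ ≤ diagConst s := by
  calc wgt s k * ∫⁻ p, (wgt s p * wgt s (k - p))⁻¹
      = ∫⁻ p, wgt s (p + (k - p)) * (wgt s p * wgt s (k - p))⁻¹ := by
        simp_rw [add_sub_cancel]
        exact (lintegral_const_mul' _ _ (wgt_ne_top s k)).symm
    _ ≤ ∫⁻ p, ENNReal.ofReal (4 ^ s) * ((wgt s p)⁻¹ + (wgt s (k - p))⁻¹) :=
        lintegral_mono fun p => wgt_add_mul_inv_wgt_mul_wgt_le hs p (k - p)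
    _ = diagConst s := by
        rw [lintegral_const_mul' _ _ ENNReal.ofReal_ne_top,
          lintegral_add_left (f := fun ξ => (wgt s ξ)⁻¹) (measurable_wgt s).inv,
          lintegral_sub_left_eq_self (fun ξ => (wgt s ξ)⁻¹), diagConst, two_mul]

theorem wgt_mul_enorm_integral_sq_le {E : Type*} [NormedAddCommGroup E] [NormedSpace ℝ E]
    (hs : 0 ≤ s) (k : E3) {f : E3 → E} (hf : AEStronglyMeasurable f) :
    wgt s k * (‖∫ p, f p‖₊ : ℝ≥0∞) ^ 2 ≤
      diagConst s * ∫⁻ p, wgt s p * wgt s (k - p) * (‖f p‖₊ : ℝ≥0∞) ^ 2 := by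
  set G : E3 → ℝ≥0∞ := fun p => wgt s p * wgt s (k - p)
  have hG : Measurable G :=
    (measurable_wgt s).mul ((measurable_wgt s).comp (measurable_const.sub measurable_id))
  have hCS : (‖∫ p, f p‖₊ : ℝ≥0∞) ^ 2 ≤
      (∫⁻ p, G p * (‖f p‖₊ : ℝ≥0∞) ^ 2) * ∫⁻ p, (G p)⁻¹ :=
    (pow_le_pow_left' (enorm_integral_le_lintegral_enorm f) 2).trans
      (ENNReal.lintegral_sq_le_lintegral_mul_sq_mul_lintegral_inv hf.enorm hG.aemeasurable
        (fun p => mul_ne_zero (wgt_ne_zero s p) (wgt_ne_zero s (k - p)))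
        (fun p => ENNReal.mul_ne_top (wgt_ne_top s p) (wgt_ne_top s (k - p))))
  calc wgt s k * (‖∫ p, f p‖₊ : ℝ≥0∞) ^ 2
      ≤ wgt s k * ((∫⁻ p, G p * (‖f p‖₊ : ℝ≥0∞) ^ 2) * ∫⁻ p, (G p)⁻¹) := by gcongr
    _ = (wgt s k * ∫⁻ p, (G p)⁻¹) * ∫⁻ p, G p * (‖f p‖₊ : ℝ≥0∞) ^ 2 := by ring
    _ ≤ diagConst s * ∫⁻ p, G p * (‖f p‖₊ : ℝ≥0∞) ^ 2 := by
        gcongr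
        exact wgt_mul_lintegral_inv_wgt_mul_wgt_sub_le hs k

theorem diagSq_le (hs : 3 / 2 < s) {Γ : E3 → E3 → MT}
    (hΓ : Measurable fun pq : E3 × E3 => Γ pq.1 pq.2) :
    diagSq s Γ ≤ diagConst s * hsKerSq s s Γ := by
  have hΓ_slice : ∀ k : E3, Measurable fun p => Γ p (k - p) := fun k =>
    hΓ.comp (measurable_id.prodMk (measurable_const.sub measurable_id))
  have hweighted : Measurable fun pq : E3 × E3 =>
      wgt s pq.1 * wgt s pq.2 * (‖Γ pq.1 pq.2‖₊ : ℝ≥0∞) ^ 2 :=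
    ((measurable_wgt s).comp measurable_fst).mul ((measurable_wgt s).comp measurable_snd)
      |>.mul (hΓ.enorm.pow_const 2)
  calc diagSq s Γ
      ≤ ∫⁻ k, diagConst s * ∫⁻ p, wgt s p * wgt s (k - p) * (‖Γ p (k - p)‖₊ : ℝ≥0∞) ^ 2 :=
        lintegral_mono fun k =>
          wgt_mul_enorm_integral_sq_le (by linarith) k (hΓ_slice k).aestronglyMeasurable
    _ = diagConst s * ∫⁻ k, ∫⁻ p, wgt s p * wgt s (k - p) * (‖Γ p (k - p)‖₊ : ℝ≥0∞) ^ 2 :=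
        lintegral_const_mul' _ _ (diagConst_ne_top hs)
    _ = diagConst s * hsKerSq s s Γ := by
        rw [lintegral_lintegral_comp_prod_sub_swap volume hweighted, hsKerSq]

end Weight

theorem ENNReal.exists_pos_le_ofReal_sq {C : ℝ≥0∞} (hC : C ≠ ∞) :
    ∃ c > (0 : ℝ), C ≤ ENNReal.ofReal (c ^ 2) := by
  refine ⟨C.toReal + 1, by positivity, ?_⟩
  rw [ENNReal.le_ofReal_iff_toReal_le hC (by positivity)]
  nlinarith [C.toReal_nonneg]

/-- Let `s > 3/2` and let `Γ` be Hilbert–Schmidt with `(1-Δ)^{s/2}Γ(1-Δ)^{s/2}`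
Hilbert–Schmidt.  Then the diagonal `x ↦ Γ(x,x)` belongs to `H^s` and
`‖Γ(·,·)‖_{H^s} ≤ c ‖Γ‖_{𝔥^s}` with `c` depending only on `s` (stated for squared
norms, in Fourier variables). -/
theorem stmt_2 (s : ℝ) (hs : 3 / 2 < s) :
    ∃ c > (0 : ℝ), ∀ Γ : E3 → E3 → MT,
      Measurable (fun pq : E3 × E3 => Γ pq.1 pq.2) →
      diagSq s Γ ≤ ENNReal.ofReal (c ^ 2) * hsKerSq s s Γ := by
  obtain ⟨c, hc, hC⟩ := ENNReal.exists_pos_le_ofReal_sq (diagConst_ne_top hs)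
  exact ⟨c, hc, fun Γ hΓ => (diagSq_le hs hΓ).trans (mul_le_mul_left hC _)⟩

end
end
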